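/- arXiv:0708.0697 — 4 statements merged into one kernel-verified Lean document; each statement's English description precedes it below -/
import Mathlib

section
/- For every finite abelian group G with |G| = n, almost every point of the simplex S(G) (with respect to the (n−1)-dimensional Hausdorff measure on S(G) ⊂ ℝ^G) satisfies: the iterates V^k x converge, as k → ∞, to the uniform distribution ν given by ν(g) = 1/n for all g ∈ G (the center of the simplex). -/
open Finset MeasureTheory Filter

/- The quadratic stochastic operator (convolution square) on a finite abelian group:
`(Vx)(h) = ∑_{f,g ∈ G, f+g=h} x(f)·x(g)`. -/
open Classical in
noncomputable def QSO {G : Type*} [AddCommGroup G] [Fintype G] (x : G → ℝ) : G → ℝ :=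
  fun h => ∑ p ∈ Finset.univ.filter (fun p : G × G => p.1 + p.2 = h), x p.1 * x p.2

/-!
Write `ν` for the uniform distribution. Convolution with `ν` kills every vector of total mass
zero, so for `z` of mass one, `V (ν + t • (z - ν)) = ν + t ^ 2 • (V z - ν)`, and by induction
`V^[k] (ν + t • (z - ν)) = ν + t ^ 2 ^ k • (V^[k] z - ν)`. A point `x` of the simplex with all
coordinates positive is of this form with `z` in the simplex and `|t| < 1`, so its orbit converges
to `ν`. The remaining points lie on the faces `x g = 0`, each contained in an affine subspace of
dimension `n - 2`, hence null for the `(n - 1)`-dimensional Hausdorff measure.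
-/

open Module

section Dynamics

variable {G : Type*} [AddCommGroup G] [Fintype G]

theorem QSO_apply (x : G → ℝ) (h : G) : QSO x h = ∑ f, x f * x (h - f) := by
  classical
  simp only [QSO, sum_filter, Fintype.sum_prod_type, ← eq_sub_iff_add_eq', Fintype.sum_ite_eq']

theorem sum_QSO (x : G → ℝ) : ∑ h, QSO x h = (∑ g, x g) ^ 2 := by
  simp only [QSO_apply]
  rw [sum_comm, sq, sum_mul]
  refine sum_congr rfl fun f _ => ?_
  rw [← mul_sum]
  exact congrArg _ ((Equiv.subRight f).sum_comp x)

theorem QSO_mapsTo_stdSimplex : Set.MapsTo QSO (stdSimplex ℝ G) (stdSimplex ℝ G) := by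
  rintro x ⟨hx₀, hx₁⟩
  refine ⟨fun h => ?_, by rw [sum_QSO, hx₁, one_pow]⟩
  rw [QSO_apply]
  exact sum_nonneg fun f _ => mul_nonneg (hx₀ f) (hx₀ (h - f))

theorem QSO_smul (s : ℝ) (x : G → ℝ) : QSO (s • x) = s ^ 2 • QSO x := by
  ext h
  simp only [QSO_apply, Pi.smul_apply, smul_eq_mul, mul_sum]
  exact sum_congr rfl fun f _ => by ring

variable (G) in
noncomputable def uniformDist : G → ℝ := fun _ => 1 / Fintype.card G

theorem sum_uniformDist : ∑ g, uniformDist G g = 1 := by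
  simp [uniformDist]

theorem QSO_uniformDist_add {y : G → ℝ} (hy : ∑ g, y g = 0) :
    QSO (uniformDist G + y) = uniformDist G + QSO y := by
  have hn : (Fintype.card G : ℝ) ≠ 0 := Nat.cast_ne_zero.mpr Fintype.card_ne_zero
  have hy' (h : G) : ∑ f, y (h - f) = 0 := ((Equiv.subLeft h).sum_comp y).trans hy
  ext h
  simp only [QSO_apply, Pi.add_apply, uniformDist, add_mul, mul_add, sum_add_distrib, ← mul_sum,
    ← sum_mul, hy, hy', sum_const, card_univ, nsmul_eq_mul]
  field_simp
  ring

theorem QSO_uniformDist_add_smul {z : G → ℝ} (hz : ∑ g, z g = 1) (t : ℝ) :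
    QSO (uniformDist G + t • (z - uniformDist G))
      = uniformDist G + t ^ 2 • (QSO z - uniformDist G) := by
  have hy : ∑ g, (z - uniformDist G) g = 0 := by
    simp [sum_sub_distrib, hz, sum_uniformDist]
  have hty : ∑ g, (t • (z - uniformDist G)) g = 0 := by
    simp only [Pi.smul_apply, smul_eq_mul, ← mul_sum, hy, mul_zero]
  have hQz : QSO z = uniformDist G + QSO (z - uniformDist G) := by
    rw [← QSO_uniformDist_add hy, add_sub_cancel]
  rw [QSO_uniformDist_add hty, QSO_smul, hQz, add_sub_cancel_left]

theorem iterate_QSO_uniformDist_add_smul {z : G → ℝ} (hz : ∑ g, z g = 1) (t : ℝ) (k : ℕ) :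
    QSO^[k] (uniformDist G + t • (z - uniformDist G))
      = uniformDist G + t ^ 2 ^ k • (QSO^[k] z - uniformDist G) := by
  induction k generalizing z t with
  | zero => simp
  | succ k ih =>
    have hQz : ∑ g, QSO z g = 1 := by rw [sum_QSO, hz, one_pow]
    rw [Function.iterate_succ_apply, QSO_uniformDist_add_smul hz, ih hQz, ← pow_mul, ← pow_succ',
      Function.iterate_succ_apply]

theorem tendsto_iterate_QSO_uniformDist_add_smul {z : G → ℝ} (hz : z ∈ stdSimplex ℝ G) {t : ℝ}
    (ht : |t| < 1) :
    Tendsto (fun k => QSO^[k] (uniformDist G + t • (z - uniformDist G))) atTop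
      (nhds (uniformDist G)) := by
  simp_rw [iterate_QSO_uniformDist_add_smul hz.2]
  have hpow : Tendsto (fun k : ℕ => t ^ 2 ^ k) atTop (nhds 0) :=
    (tendsto_pow_atTop_nhds_zero_of_abs_lt_one ht).comp
      (tendsto_pow_atTop_atTop_of_one_lt (α := ℕ) one_lt_two)
  have hbdd : IsBoundedUnder (· ≤ ·) atTop (fun k => ‖QSO^[k] z - uniformDist G‖) := by
    refine isBoundedUnder_of ⟨1 + ‖uniformDist G‖, fun k => (norm_sub_le _ _).trans ?_⟩
    gcongr
    exact mem_closedBall_zero_iff.mp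
      (stdSimplex_subset_closedBall (QSO_mapsTo_stdSimplex.iterate k hz))
  simpa using (hpow.zero_smul_isBoundedUnder_le hbdd).const_add (uniformDist G)

theorem exists_eq_uniformDist_add_smul {x : G → ℝ} (hx : ∑ g, x g = 1) (hpos : ∀ g, 0 < x g) :
    ∃ t : ℝ, |t| < 1 ∧ ∃ z ∈ stdSimplex ℝ G, x = uniformDist G + t • (z - uniformDist G) := by
  have hn : (0 : ℝ) < Fintype.card G := Nat.cast_pos.mpr Fintype.card_pos
  obtain ⟨g₀, -, hmin⟩ := exists_min_image univ x univ_nonempty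
  have hn_min : Fintype.card G * x g₀ ≤ 1 := by
    simpa [← hx] using card_nsmul_le_sum univ x (x g₀) fun g _ => hmin g (mem_univ g)
  -- any `t` with `1 - n * x g₀ < t < 1` would do
  set t := 1 - Fintype.card G * x g₀ / 2 with ht
  have ht₀ : 0 < t := by linarith
  have ht₁ : t < 1 := by linarith [mul_pos hn (hpos g₀)]
  refine ⟨t, abs_lt.mpr ⟨by linarith, ht₁⟩, uniformDist G + t⁻¹ • (x - uniformDist G),
    ⟨fun g => ?_, ?_⟩, ?_⟩
  · have hz : 1 / Fintype.card G + t⁻¹ * (x g - 1 / Fintype.card G)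
        = t⁻¹ * (x g - x g₀ / 2) := by
      field_simp
      rw [ht]
      ring
    simp only [Pi.add_apply, Pi.smul_apply, Pi.sub_apply, smul_eq_mul, uniformDist, hz]
    exact mul_nonneg (inv_nonneg.mpr ht₀.le) (by linarith [hmin g (mem_univ g), hpos g₀])
  · simp [sum_add_distrib, ← mul_sum, sum_sub_distrib, hx, sum_uniformDist]
  · rw [add_sub_cancel_left, smul_smul, mul_inv_cancel₀ ht₀.ne', one_smul, add_sub_cancel]

theorem tendsto_iterate_QSO_of_pos {x : G → ℝ} (hx : ∑ g, x g = 1) (hpos : ∀ g, 0 < x g) :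
    Tendsto (fun k => QSO^[k] x) atTop (nhds (uniformDist G)) := by
  obtain ⟨t, ht, z, hz, rfl⟩ := exists_eq_uniformDist_add_smul hx hpos
  exact tendsto_iterate_QSO_uniformDist_add_smul hz ht

end Dynamics

theorem AffineSubspace.hausdorffMeasure_eq_zero_of_finrank_lt {E : Type*} [NormedAddCommGroup E]
    [NormedSpace ℝ E] [FiniteDimensional ℝ E] [MeasurableSpace E] [BorelSpace E]
    (A : AffineSubspace ℝ E) {d : ℝ} (hd : (finrank ℝ A.direction : ℝ) < d) :
    μH[d] (A : Set E) = 0 := by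
  rcases (A : Set E).eq_empty_or_nonempty with hA | hA
  · rw [hA, measure_empty]
  lift d to NNReal using (Nat.cast_nonneg _).trans hd.le
  apply hausdorffMeasure_of_dimH_lt
  rw [Real.Convex.dimH_eq_finrank_vectorSpan A.convex hA, ← A.direction_eq_vectorSpan]
  exact_mod_cast hd

section Faces

variable {ι : Type*} [Fintype ι]

theorem hausdorffMeasure_face_stdSimplex_eq_zero (i : ι) :
    μH[(Fintype.card ι : ℝ) - 1] {x ∈ stdSimplex ℝ ι | x i = 0} = 0 := by
  rcases subsingleton_or_nontrivial ι with hι | hι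
  · convert measure_empty (μ := μH[(Fintype.card ι : ℝ) - 1])
    refine Set.eq_empty_of_forall_notMem fun x ⟨⟨_, hx⟩, hxi⟩ => ?_
    rw [Fintype.sum_subsingleton _ i, hxi] at hx
    exact zero_ne_one hx
  classical
  obtain ⟨j, hji⟩ := exists_ne i
  let L : (ι → ℝ) →ₗ[ℝ] ℝ × ℝ := (LinearMap.proj i).prod (∑ k, LinearMap.proj k)
  have hL (x : ι → ℝ) : L x = (x i, ∑ k, x k) := by simp [L]
  have hL_surj : Function.Surjective L := by
    rintro ⟨a, b⟩
    refine ⟨Pi.single i a + Pi.single j (b - a), ?_⟩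
    simp [hL, hji, sum_add_distrib]
  have hker : finrank ℝ (LinearMap.ker L) = Fintype.card ι - 2 := by
    have := L.finrank_range_add_finrank_ker
    rw [LinearMap.range_eq_top.mpr hL_surj, finrank_top, finrank_prod, finrank_self,
      finrank_fintype_fun_eq_card] at this
    omega
  let A := AffineSubspace.mk' (Pi.single j 1 : ι → ℝ) (LinearMap.ker L)
  refine measure_mono_null (t := A) (fun x ⟨⟨_, hx⟩, hxi⟩ => ?_)
    (A.hausdorffMeasure_eq_zero_of_finrank_lt ?_)
  · simp [A, AffineSubspace.mem_mk', hL, hxi, hji, hx, sum_sub_distrib]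
  · rw [AffineSubspace.direction_mk', hker]
    have := Fintype.one_lt_card (α := ι)
    push_cast [Nat.cast_sub (by omega : 2 ≤ Fintype.card ι)]
    linarith

theorem ae_restrict_stdSimplex_forall_pos :
    ∀ᵐ x ∂(μH[(Fintype.card ι : ℝ) - 1] : Measure (ι → ℝ)).restrict (stdSimplex ℝ ι),
      ∀ i, 0 < x i := by
  rw [ae_restrict_iff' (isClosed_stdSimplex ℝ ι).measurableSet, ae_iff]
  refine measure_mono_null (fun x hx => ?_)
    (measure_iUnion_null fun i => hausdorffMeasure_face_stdSimplex_eq_zero i)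
  simp only [Classical.not_imp, not_forall, not_lt, Set.mem_ofPred_eq] at hx
  obtain ⟨hxS, i, hi⟩ := hx
  exact Set.mem_iUnion.mpr ⟨i, hxS, le_antisymm hi (hxS.1 i)⟩

end Faces

/-- Almost every point of the simplex `S(G) ⊂ ℝ^G` — with respect to the
`(n-1)`-dimensional Hausdorff measure restricted to the simplex, where `n = |G|` —
has its orbit under the quadratic stochastic operator `V` converging to the
uniform distribution `ν(g) = 1/n` (the center of the simplex). -/
theorem qso_ae_tendsto_center {G : Type*} [AddCommGroup G] [Fintype G] :
    ∀ᵐ x ∂((μH[(Fintype.card G : ℝ) - 1] :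
        Measure (G → ℝ)).restrict {x : G → ℝ | (∀ g, 0 ≤ x g) ∧ ∑ g, x g = 1}),
      Tendsto (fun k => QSO^[k] x) atTop
        (nhds (fun _ => (1 : ℝ) / Fintype.card G)) := by
  filter_upwards [ae_restrict_mem (isClosed_stdSimplex ℝ G).measurableSet,
    ae_restrict_stdSimplex_forall_pos] with x hx hpos
  exact tendsto_iterate_QSO_of_pos hx.2 hpos
end

section
/- Let k, n be positive integers with n ≥ k and let p ∈ [1/(k+1), 1/k]. Then the maximum of Σ_{i=1}^{n+1} x_i² over all (x_1, …, x_{n+1}) with Σ_{i=1}^{n+1} x_i = 1 and 0 ≤ x_i ≤ p for all i equals k·p² + (1 − k·p)². -/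
/-!
Since `∑ xᵢ² = p ∑ xᵢ - ∑ xᵢ (p - xᵢ)`, it suffices to bound `∑ xᵢ (p - xᵢ)` from below. On
`[0, p]` the map `t ↦ t (p - t)` is superadditive modulo `p`: merging two entries `a, b` into
`a + b` (or into `a + b - p` when that exceeds `p`) can only decrease the sum, the loss being
`2ab` (resp. `2(p - a)(p - b)`). Merging all entries leaves the residue `r ∈ [0, p]` of
`∑ xᵢ = 1 = k p + r` modulo `p`, so `∑ xᵢ² ≤ p - r (p - r) = k p² + r²`; equality holds for
`k` entries equal to `p` and one equal to `r`.
-/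

open Finset

section SumOfSquares

variable {p : ℝ}

lemma add_mul_sub_add_le {a b : ℝ} (ha : 0 ≤ a) (hb : 0 ≤ b) :
    (a + b) * (p - (a + b)) ≤ a * (p - a) + b * (p - b) := by
  nlinarith [mul_nonneg ha hb]

lemma add_sub_mul_sub_add_sub_le {a b : ℝ} (ha : a ≤ p) (hb : b ≤ p) :
    (a + b - p) * (p - (a + b - p)) ≤ a * (p - a) + b * (p - b) := by
  nlinarith [mul_nonneg (sub_nonneg.mpr ha) (sub_nonneg.mpr hb)]

lemma exists_nat_mul_add_mul_sub_le_sum {ι : Type*} (hp : 0 ≤ p) (t : Finset ι) {x : ι → ℝ}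
    (h0 : ∀ i ∈ t, 0 ≤ x i) (h1 : ∀ i ∈ t, x i ≤ p) :
    ∃ (m : ℕ) (s : ℝ), s ∈ Set.Icc 0 p ∧ ∑ i ∈ t, x i = m * p + s ∧
      s * (p - s) ≤ ∑ i ∈ t, x i * (p - x i) := by
  induction t using Finset.cons_induction with
  | empty => exact ⟨0, 0, ⟨le_rfl, hp⟩, by simp, by simp⟩
  | cons a t ha ih =>
    simp only [mem_cons, forall_eq_or_imp] at h0 h1
    obtain ⟨m, s, ⟨hs0, hsp⟩, hsum, hle⟩ := ih h0.2 h1.2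
    rw [sum_cons, sum_cons]
    by_cases hc : s + x a ≤ p
    · refine ⟨m, s + x a, ⟨by linarith [h0.1], hc⟩, by rw [hsum]; ring, ?_⟩
      linarith [add_mul_sub_add_le (p := p) hs0 h0.1]
    · refine ⟨m + 1, s + x a - p, ⟨by linarith, by linarith [h1.1]⟩,
        by rw [hsum]; push_cast; ring, ?_⟩
      linarith [add_sub_mul_sub_add_sub_le hsp h1.1]

/-- `t ↦ t (p - t)` vanishes at both ends of `[0, p]`, so it is well defined modulo `p`. -/
lemma mul_sub_eq_of_nat_mul_add_eq {m m' : ℕ} {s s' : ℝ} (hs : s ∈ Set.Icc 0 p)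
    (hs' : s' ∈ Set.Icc 0 p) (h : m * p + s = m' * p + s') :
    s * (p - s) = s' * (p - s') := by
  obtain ⟨hs0, hsp⟩ := hs
  obtain ⟨hs0', hsp'⟩ := hs'
  rcases lt_trichotomy m m' with hm | rfl | hm
  · have hm : (m : ℝ) + 1 ≤ m' := by exact_mod_cast hm
    have : s' = 0 := by nlinarith
    have : s = p := by nlinarith
    simp_all
  · rw [add_left_cancel h]
  · have hm : (m' : ℝ) + 1 ≤ m := by exact_mod_cast hm
    have : s = 0 := by nlinarith
    have : s' = p := by nlinarith
    simp_all

lemma sum_sq_le_of_sum_eq_nat_mul_add {ι : Type*} (t : Finset ι) {x : ι → ℝ} {m : ℕ} {r : ℝ}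
    (h0 : ∀ i ∈ t, 0 ≤ x i) (h1 : ∀ i ∈ t, x i ≤ p) (hr : r ∈ Set.Icc 0 p)
    (hsum : ∑ i ∈ t, x i = m * p + r) :
    ∑ i ∈ t, x i ^ 2 ≤ m * p ^ 2 + r ^ 2 := by
  obtain ⟨m', s, hs, hsum', hle⟩ :=
    exists_nat_mul_add_mul_sub_le_sum (hr.1.trans hr.2) t h0 h1
  have hrs : r * (p - r) = s * (p - s) :=
    mul_sub_eq_of_nat_mul_add_eq hr hs (hsum.symm.trans hsum')
  have hsq : ∑ i ∈ t, x i ^ 2 = p * ∑ i ∈ t, x i - ∑ i ∈ t, x i * (p - x i) := by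
    rw [mul_sum, ← sum_sub_distrib]
    exact sum_congr rfl fun i _ => by ring
  rw [hsq, hsum]
  nlinarith

end SumOfSquares

lemma sum_range_ite_lt_ite_eq {M : Type*} [AddCommMonoid M] {k N : ℕ} (hkN : k < N) (a b : M) :
    ∑ i ∈ range N, (if i < k then a else if i = k then b else 0) = k • a + b := by
  induction N, hkN using Nat.le_induction with
  | base =>
    rw [sum_range_succ, sum_congr rfl fun i hi => if_pos (mem_range.mp hi)]
    simp
  | succ N hN ih =>
    rw [sum_range_succ, ih, if_neg (by omega), if_neg (by omega), add_zero]

theorem max_sum_sq_eq_general (k n : ℕ) (hn : k ≤ n) (p : ℝ)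
    (hp : p ∈ Set.Icc (1 / (k + 1 : ℝ)) (1 / (k : ℝ))) :
    IsGreatest
      {s : ℝ | ∃ x : Fin (n + 1) → ℝ,
        (∀ i, 0 ≤ x i) ∧ (∀ i, x i ≤ p) ∧ (∑ i, x i = 1) ∧ s = ∑ i, (x i) ^ 2}
      ((k : ℝ) * p ^ 2 + (1 - (k : ℝ) * p) ^ 2) := by
  obtain ⟨hp_lo, hp_hi⟩ := hp
  have hk1p : 1 ≤ (k + 1) * p := by
    rwa [div_le_iff₀ (by positivity), mul_comm] at hp_lo
  have hkp : k * p ≤ 1 := by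
    rw [mul_comm]; exact mul_le_of_le_div₀ zero_le_one k.cast_nonneg hp_hi
  have hr : 1 - k * p ∈ Set.Icc 0 p := ⟨by linarith, by linarith⟩
  have hsum_split (a b : ℝ) :
      ∑ i : Fin (n + 1), (if (i : ℕ) < k then a else if (i : ℕ) = k then b else 0) = k * a + b := by
    rw [Fin.sum_univ_eq_sum_range (fun i => if i < k then a else if i = k then b else 0),
      sum_range_ite_lt_ite_eq (by omega), nsmul_eq_mul]
  refine ⟨⟨fun i => if (i : ℕ) < k then p else if (i : ℕ) = k then 1 - k * p else 0,
      fun i => ?_, fun i => ?_, ?_, ?_⟩, ?_⟩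
  · dsimp only; split_ifs <;> linarith [hr.1]
  · dsimp only; split_ifs <;> linarith [hr.2]
  · rw [hsum_split]; ring
  · simp only [ite_pow, zero_pow two_ne_zero, hsum_split]
  · rintro s ⟨x, h0, h1, hx, rfl⟩
    exact sum_sq_le_of_sum_eq_nat_mul_add univ (fun i _ => h0 i) (fun i _ => h1 i) hr
      (by rw [hx]; ring)

/-- Let `k, n` be positive integers with `n ≥ k` and `p ∈ [1/(k+1), 1/k]`. Then the
maximum of `∑ xᵢ²` over all `(x₁, …, x_{n+1})` with `∑ xᵢ = 1` and `0 ≤ xᵢ ≤ p` equals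
`k·p² + (1 − k·p)²`. -/
theorem max_sum_sq_eq (k n : ℕ) (hk : 0 < k) (hn : k ≤ n) (p : ℝ)
    (hp : p ∈ Set.Icc (1 / (k + 1 : ℝ)) (1 / (k : ℝ))) :
    IsGreatest
      {s : ℝ | ∃ x : Fin (n + 1) → ℝ,
        (∀ i, 0 ≤ x i) ∧ (∀ i, x i ≤ p) ∧ (∑ i, x i = 1) ∧ s = ∑ i, (x i) ^ 2}
      ((k : ℝ) * p ^ 2 + (1 - (k : ℝ) * p) ^ 2) :=
  max_sum_sq_eq_general k n hn p hp
end

section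
/- For n ≥ 2 and 1/n ≤ p < 1, the maximal sums of squares satisfy the recurrence f_n(p) = p² + (1 − p)²·f_{n−1}(p/(1 − p)), where f_m(q) denotes the maximum of Σ_{i=1}^{m+1} x_i² over all (x_1, …, x_{m+1}) with Σ x_i = 1 and 0 ≤ x_i ≤ q (assuming the constraint sets on both sides are nonempty, i.e. (n+1)p ≥ 1 and n·p/(1−p) ≥ 1). -/
/-!
A maximiser of the sum of squares on the simplex capped at `q ≤ 1` has a coordinate equal to
`q`: otherwise moving mass from a smaller positive coordinate to a largest one stays feasible and
strictly increases the sum of squares. Inserting a coordinate `p` into `(1 - p) • y` maps the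
simplex capped at `p / (1 - p)` bijectively onto the points of the simplex capped at `p` having
that coordinate equal to `p`, and turns `∑ yᵢ²` into `p² + (1 - p)² ∑ yᵢ²`; so maximisers
correspond to maximisers.
-/

open Finset

/-- `f m q` is the maximum (supremum) of the sum of squares of `m+1` nonnegative reals,
each at most `q`, whose total sum is `1`. -/
noncomputable def maxSumSq (m : ℕ) (q : ℝ) : ℝ :=
  sSup {s : ℝ | ∃ x : Fin (m + 1) → ℝ,
    (∀ i, 0 ≤ x i) ∧ (∀ i, x i ≤ q) ∧ (∑ i, x i = 1) ∧ s = ∑ i, (x i) ^ 2}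

def cappedSimplex (ι : Type*) [Fintype ι] (q : ℝ) : Set (ι → ℝ) :=
  {x | (∀ i, 0 ≤ x i) ∧ (∀ i, x i ≤ q) ∧ ∑ i, x i = 1}

section CappedSimplex

variable {ι : Type*} [Fintype ι] {q : ℝ}

theorem cappedSimplex_nonempty (h : 1 ≤ Fintype.card ι * q) : (cappedSimplex ι q).Nonempty := by
  have hcard : (Fintype.card ι : ℝ) ≠ 0 := by rintro h0; simp only [h0, zero_mul] at h; linarith
  refine ⟨fun _ => (Fintype.card ι : ℝ)⁻¹, fun _ => by positivity, fun _ => ?_, ?_⟩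
  · rw [inv_le_iff_one_le_mul₀ (by positivity), mul_comm]; exact h
  · simp [hcard]

theorem isCompact_cappedSimplex : IsCompact (cappedSimplex ι q) := by
  have hclosed : IsClosed (cappedSimplex ι q) := by
    simp only [cappedSimplex, Set.ofPred_and, Set.ofPred_forall]
    refine (isClosed_iInter fun i => isClosed_le ?_ ?_).inter
      ((isClosed_iInter fun i => isClosed_le ?_ ?_).inter (isClosed_eq ?_ ?_)) <;> fun_prop
  exact (isCompact_Icc (a := 0) (b := fun _ => q)).of_isClosed_subset hclosed
    fun x hx => ⟨hx.1, hx.2.1⟩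

theorem sum_sq_lt_sum_sq_add_single_sub_single [DecidableEq ι] (x : ι → ℝ) {i j : ι} (hij : i ≠ j)
    (hle : x j ≤ x i) {ε : ℝ} (hε : 0 < ε) :
    ∑ k, x k ^ 2 < ∑ k, (x + Pi.single i ε - Pi.single j ε : ι → ℝ) k ^ 2 := by
  set y : ι → ℝ := x + Pi.single i ε - Pi.single j ε
  have split (f : ι → ℝ) : ∑ k, f k = f i + f j + ∑ k ∈ (univ.erase i).erase j, f k := by
    rw [← add_sum_erase _ _ (mem_univ i), ← add_sum_erase _ _ (mem_erase.2 ⟨hij.symm, mem_univ j⟩),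
      add_assoc]
  have hrest : ∑ k ∈ (univ.erase i).erase j, y k ^ 2 = ∑ k ∈ (univ.erase i).erase j, x k ^ 2 :=
    sum_congr rfl fun k hk => by
      simp only [mem_erase] at hk
      simp [y, hk.1, hk.2.1]
  have hyi : y i = x i + ε := by simp [y, hij]
  have hyj : y j = x j - ε := by simp [y, hij.symm]
  rw [split (x · ^ 2), split (y · ^ 2), hrest, hyi, hyj]
  nlinarith

theorem exists_eq_of_isMaxOn_cappedSimplex (hq : q ≤ 1) {x : ι → ℝ} (hx : x ∈ cappedSimplex ι q)
    (hmax : IsMaxOn (fun y : ι → ℝ => ∑ k, y k ^ 2) (cappedSimplex ι q) x) : ∃ i, x i = q := by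
  classical
  obtain ⟨hx0, hxq, hx1⟩ := hx
  by_contra! hne
  have hlt (k : ι) : x k < q := (hxq k).lt_of_ne (hne k)
  obtain ⟨i, -, hi⟩ := exists_max_image univ x (nonempty_of_sum_ne_zero (by rw [hx1]; norm_num))
  obtain ⟨j, hji, hj⟩ : ∃ j, j ≠ i ∧ 0 < x j := by
    by_contra! h
    have : ∑ k, x k = x i :=
      sum_eq_single i (fun k _ hk => le_antisymm (h k hk) (hx0 k)) (by simp)
    linarith [hlt i]
  set ε := min (q - x i) (x j)
  have hε : 0 < ε := lt_min (sub_pos.2 (hlt i)) hj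
  have hεi : ε ≤ q - x i := min_le_left _ _
  have hεj : ε ≤ x j := min_le_right _ _
  have hmem : (x + Pi.single i ε - Pi.single j ε : ι → ℝ) ∈ cappedSimplex ι q := by
    refine ⟨fun k => ?_, fun k => ?_, ?_⟩ <;>
      simp only [Pi.add_apply, Pi.sub_apply, Pi.single_apply, sum_sub_distrib, sum_add_distrib,
        sum_ite_eq', mem_univ, if_true, hx1]
    · split_ifs with hk hk' <;> subst_vars <;> linarith [hx0 k]
    · split_ifs with hk hk' <;> subst_vars <;> linarith [hxq k, hlt k]
    · ring
  exact (hmax hmem).not_gt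
    (sum_sq_lt_sum_sq_add_single_sub_single x hji.symm (hi j (mem_univ j)) hε)

end CappedSimplex

theorem insertNth_mem_cappedSimplex_iff {n : ℕ} {p : ℝ} (hp0 : 0 ≤ p) (hp1 : p < 1)
    (k : Fin (n + 1)) (y : Fin n → ℝ) :
    Fin.insertNth k p ((1 - p) • y) ∈ cappedSimplex (Fin (n + 1)) p ↔
      y ∈ cappedSimplex (Fin n) (p / (1 - p)) := by
  have h1p : 0 < 1 - p := sub_pos.2 hp1
  simp only [cappedSimplex, Set.mem_ofPred_eq, Fin.forall_iff_succAbove k, Fin.insertNth_apply_same,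
    Fin.insertNth_apply_succAbove, Fin.sum_insertNth, Pi.smul_apply, smul_eq_mul, ← mul_sum,
    mul_nonneg_iff_of_pos_left h1p, le_div_iff₀ h1p, mul_comm _ (1 - p), le_refl, hp0, true_and]
  have hsum (S : ℝ) : p + (1 - p) * S = 1 ↔ S = 1 :=
    ⟨fun h => mul_left_cancel₀ h1p.ne' (by linarith), fun h => by rw [h]; ring⟩
  rw [hsum]

theorem sum_sq_insertNth_smul {n : ℕ} (k : Fin (n + 1)) (a c : ℝ) (y : Fin n → ℝ) :
    ∑ i, Fin.insertNth k a (c • y) i ^ 2 = a ^ 2 + c ^ 2 * ∑ i, y i ^ 2 := by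
  simp [Fin.sum_univ_succAbove _ k, mul_pow, mul_sum]

theorem maxSumSq_eq_of_isMaxOn {m : ℕ} {q : ℝ} {x : Fin (m + 1) → ℝ}
    (hx : x ∈ cappedSimplex (Fin (m + 1)) q)
    (hmax : IsMaxOn (fun y : Fin (m + 1) → ℝ => ∑ i, y i ^ 2) (cappedSimplex (Fin (m + 1)) q) x) :
    maxSumSq m q = ∑ i, x i ^ 2 := by
  refine IsGreatest.csSup_eq ⟨⟨x, hx.1, hx.2.1, hx.2.2, rfl⟩, ?_⟩
  rintro s ⟨y, hy0, hyq, hy1, rfl⟩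
  exact hmax ⟨hy0, hyq, hy1⟩

theorem maxSumSq_recurrence_general (n : ℕ) (p : ℝ) (hp₂ : p < 1) (hne₁ : 1 ≤ ((n : ℝ) + 1) * p) :
    maxSumSq n p = p ^ 2 + (1 - p) ^ 2 * maxSumSq (n - 1) (p / (1 - p)) := by
  obtain ⟨m, rfl⟩ : ∃ m, n = m + 1 := Nat.exists_eq_add_one.2 <| Nat.pos_of_ne_zero <| by
    rintro rfl
    simp only [CharP.cast_eq_zero, zero_add, one_mul] at hne₁
    linarith
  have hp0 : 0 < p := pos_of_mul_pos_right (one_pos.trans_le hne₁) (by positivity)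
  have h1p : 0 < 1 - p := sub_pos.2 hp₂
  obtain ⟨x, hx, hmax⟩ := (isCompact_cappedSimplex (ι := Fin (m + 2)) (q := p)).exists_isMaxOn
    (cappedSimplex_nonempty (by simpa [add_assoc, one_add_one_eq_two] using hne₁))
    (by fun_prop : Continuous fun y : Fin (m + 2) → ℝ => ∑ i, y i ^ 2).continuousOn
  obtain ⟨k, hk⟩ := exists_eq_of_isMaxOn_cappedSimplex hp₂.le hx hmax
  obtain ⟨y, rfl⟩ : ∃ y, x = Fin.insertNth k p ((1 - p) • y) :=
    ⟨(1 - p)⁻¹ • k.removeNth x, by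
      rw [smul_smul, mul_inv_cancel₀ h1p.ne', one_smul, ← hk, Fin.insertNth_self_removeNth]⟩
  have hy := (insertNth_mem_cappedSimplex_iff hp0.le hp₂ k y).1 hx
  have hymax : IsMaxOn (fun z : Fin (m + 1) → ℝ => ∑ i, z i ^ 2)
      (cappedSimplex _ (p / (1 - p))) y := by
    refine isMaxOn_iff.2 fun z hz => ?_
    have := isMaxOn_iff.1 hmax _ ((insertNth_mem_cappedSimplex_iff hp0.le hp₂ k z).2 hz)
    rw [sum_sq_insertNth_smul, sum_sq_insertNth_smul, add_le_add_iff_left] at this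
    exact le_of_mul_le_mul_left this (by positivity)
  rw [Nat.add_sub_cancel, maxSumSq_eq_of_isMaxOn hx hmax, maxSumSq_eq_of_isMaxOn hy hymax,
    sum_sq_insertNth_smul]

/-- For `n ≥ 2` and `1/n ≤ p < 1` (with both constraint sets nonempty, i.e.
`(n+1)·p ≥ 1` and `n·(p/(1-p)) ≥ 1`), the maximal sums of squares satisfy the
recurrence `f_n(p) = p² + (1-p)² · f_{n-1}(p/(1-p))`. -/
theorem maxSumSq_recurrence (n : ℕ) (hn : 2 ≤ n) (p : ℝ)
    (hp₁ : 1 / (n : ℝ) ≤ p) (hp₂ : p < 1)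
    (hne₁ : 1 ≤ ((n : ℝ) + 1) * p) (hne₂ : 1 ≤ (n : ℝ) * (p / (1 - p))) :
    maxSumSq n p = p ^ 2 + (1 - p) ^ 2 * maxSumSq (n - 1) (p / (1 - p)) :=
  maxSumSq_recurrence_general n p hp₂ hne₁
end

section
/- Let G be a finite abelian group, H a proper subgroup of G, p ∈ G, and let x ∈ S(G) be the uniform distribution on the coset p + H (x(g) = 1/|H| on p + H, zero elsewhere). Let i, j ∈ G lie in distinct cosets of H (i + H ≠ j + H), and let e : G → ℝ be the vector with e(s) = 1 for s ∈ i + H, e(s) = −1 for s ∈ j + H, and e(s) = 0 otherwise. Then Σ_{g∈G} e(g) = 0 (so e lies in the tangent plane of the simplex), and the Fréchet derivative of V at x applied to e equals 2·e', where e'(s) = 1 for s ∈ p + i + H, e'(s) = −1 for s ∈ p + j + H, and e'(s) = 0 otherwise. In particular the derivative of V at x expands this tangent direction by the factor 2. -/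
open Finset

/-
`V` is the diagonal of the symmetric bilinear convolution `⋆`, so its derivative at `x` is
`u ↦ 2 (x ⋆ u)`. Since `x` is uniform on `p + H` and `e` is constant on the cosets of `H`, the
convolution `x ⋆ e` just translates `e` by `p`, which turns `±1` on `i + H`, `j + H` into `±1`
on `p + i + H`, `p + j + H`, i.e. into `e'`.
-/

theorem ContinuousLinearMap.fderiv_bilinear_diag_apply {𝕜 E F : Type*}
    [NontriviallyNormedField 𝕜] [NormedAddCommGroup E] [NormedSpace 𝕜 E]
    [NormedAddCommGroup F] [NormedSpace 𝕜 F] (B : E →L[𝕜] E →L[𝕜] F) (x u : E) :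
    fderiv 𝕜 (fun y => B y y) x u = B x u + B u x := by
  change fderiv 𝕜 (fun y => B (id y) (id y)) x u = _
  rw [(B.hasFDerivAt_of_bilinear (hasFDerivAt_id x) (hasFDerivAt_id x)).fderiv]
  simp

namespace AddSubgroup

variable {G : Type*} [AddCommGroup G] [Fintype G] (H : AddSubgroup G)

open Classical in
theorem card_filter_sub_mem (a : G) :
    #{g | g - a ∈ H} = Nat.card H := by
  rw [Nat.card_eq_fintype_card, ← Finset.card_univ]
  refine Finset.card_bij' (fun g hg => ⟨g - a, by simpa using hg⟩) (fun k _ => (k : G) + a)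
    ?_ ?_ ?_ ?_ <;> intros <;> simp_all

end AddSubgroup

section Convolution

variable {G : Type*} [AddCommGroup G] [Fintype G]

noncomputable def convolutionL : (G → ℝ) →L[ℝ] (G → ℝ) →L[ℝ] (G → ℝ) :=
  LinearMap.toContinuousBilinearMap <| LinearMap.mk₂ ℝ (fun x y h => ∑ f, x f * y (h - f))
    (by intros; funext; simp [add_mul, sum_add_distrib])
    (by intros; funext; simp [mul_sum, mul_assoc])
    (by intros; funext; simp [mul_add, sum_add_distrib])
    (by intros; funext; simp [mul_sum, mul_left_comm])

theorem convolutionL_apply (x y : G → ℝ) (h : G) :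
    convolutionL x y h = ∑ f, x f * y (h - f) :=
  rfl

theorem convolutionL_comm (x y : G → ℝ) : convolutionL x y = convolutionL y x := by
  funext h
  simp only [convolutionL_apply]
  exact Fintype.sum_equiv (Equiv.subLeft h) _ _ fun f => by simp [mul_comm]

theorem QSO_eq_convolutionL : QSO (G := G) = fun x => convolutionL x x := by
  classical
  funext x h
  rw [QSO, convolutionL_apply]
  symm
  refine Finset.sum_nbij' (fun f => (f, h - f)) Prod.fst ?_ ?_ ?_ ?_ ?_ <;> intros <;>
    simp_all [Prod.ext_iff, sub_eq_iff_eq_add']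

theorem fderiv_QSO_apply (x u : G → ℝ) :
    fderiv ℝ QSO x u = (2 : ℝ) • convolutionL x u := by
  rw [QSO_eq_convolutionL, convolutionL.fderiv_bilinear_diag_apply x u, convolutionL_comm u,
    two_smul]

variable {H : AddSubgroup G} {p : G}

theorem convolutionL_apply_of_support_coset {x y : G → ℝ} (hx : ∀ g, g - p ∉ H → x g = 0)
    (hy : ∀ s, ∀ k ∈ H, y (s + k) = y s) (h : G) :
    convolutionL x y h = (∑ f, x f) * y (h - p) := by
  rw [convolutionL_apply, sum_mul]
  refine Fintype.sum_congr _ _ fun f => ?_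
  by_cases hf : f - p ∈ H
  · rw [← hy (h - f) _ hf]
    congr 2
    abel
  · simp [hx f hf]

theorem sum_eq_one_of_uniform_coset {x : G → ℝ}
    (hx_mem : ∀ g, g - p ∈ H → x g = 1 / (Nat.card H : ℝ))
    (hx_not_mem : ∀ g, g - p ∉ H → x g = 0) :
    ∑ g, x g = 1 := by
  classical
  have hx : ∀ g, x g = if g - p ∈ H then 1 / (Nat.card H : ℝ) else 0 := fun g => by
    split_ifs with hg
    exacts [hx_mem g hg, hx_not_mem g hg]
  have hH : (Nat.card H : ℝ) ≠ 0 := Nat.cast_ne_zero.mpr Nat.card_pos.ne'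
  simp_rw [hx, sum_ite, sum_const_zero, sum_const, H.card_filter_sub_mem, nsmul_eq_mul]
  field_simp
  simp

end Convolution

section CosetDipole

variable {G : Type*} [AddCommGroup G] (H : AddSubgroup G)

open Classical in
noncomputable def cosetDipole (i j : G) : G → ℝ :=
  fun s => (if s - i ∈ H then 1 else 0) - (if s - j ∈ H then 1 else 0)

theorem eq_cosetDipole {i j : G} {e : G → ℝ}
    (he_i : ∀ s, s - i ∈ H → e s = 1)
    (he_j : ∀ s, s - j ∈ H → e s = -1)
    (he_zero : ∀ s, s - i ∉ H → s - j ∉ H → e s = 0) :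
    e = cosetDipole H i j := by
  funext s
  by_cases hi : s - i ∈ H <;> by_cases hj : s - j ∈ H
  · linarith [he_i s hi, he_j s hj]
  all_goals simp [cosetDipole, hi, hj, he_i, he_j, he_zero]

theorem sum_cosetDipole [Fintype G] (i j : G) : ∑ s, cosetDipole H i j s = 0 := by
  classical
  simp only [cosetDipole, sum_sub_distrib, sum_boole, H.card_filter_sub_mem, sub_self]

theorem cosetDipole_add_mem (i j s : G) {k : G} (hk : k ∈ H) :
    cosetDipole H i j (s + k) = cosetDipole H i j s := by
  rw [cosetDipole, cosetDipole, add_sub_right_comm s k, add_sub_right_comm s k,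
    H.add_mem_cancel_right hk, H.add_mem_cancel_right hk]

theorem cosetDipole_add_add (p i j s : G) :
    cosetDipole H (p + i) (p + j) s = cosetDipole H i j (s - p) := by
  rw [cosetDipole, cosetDipole, sub_add_eq_sub_sub, sub_add_eq_sub_sub]

end CosetDipole

theorem fderiv_qso_coset_expands_general {G : Type*} [AddCommGroup G] [Fintype G]
    (H : AddSubgroup G) (p i j : G)
    (x : G → ℝ)
    (hx_mem : ∀ g, g - p ∈ H → x g = 1 / (Nat.card H : ℝ))
    (hx_not_mem : ∀ g, g - p ∉ H → x g = 0)
    (e : G → ℝ)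
    (he_i : ∀ s, s - i ∈ H → e s = 1)
    (he_j : ∀ s, s - j ∈ H → e s = -1)
    (he_zero : ∀ s, s - i ∉ H → s - j ∉ H → e s = 0)
    (e' : G → ℝ)
    (he'_i : ∀ s, s - (p + i) ∈ H → e' s = 1)
    (he'_j : ∀ s, s - (p + j) ∈ H → e' s = -1)
    (he'_zero : ∀ s, s - (p + i) ∉ H → s - (p + j) ∉ H → e' s = 0) :
    (∑ g, e g = 0) ∧ fderiv ℝ (QSO (G := G)) x e = (2 : ℝ) • e' := by
  obtain rfl := eq_cosetDipole H he_i he_j he_zero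
  obtain rfl := eq_cosetDipole H he'_i he'_j he'_zero
  refine ⟨sum_cosetDipole H i j, ?_⟩
  rw [fderiv_QSO_apply]
  congr 1
  funext h
  rw [convolutionL_apply_of_support_coset hx_not_mem fun s k => cosetDipole_add_mem H i j s,
    sum_eq_one_of_uniform_coset hx_mem hx_not_mem, one_mul, cosetDipole_add_add]

/-- Let `H` be a proper subgroup of the finite abelian group `G`, let `x` be the uniform
distribution on a coset `p + H` (note `g ∈ p + H ↔ g - p ∈ H`), let `i, j` lie in
distinct cosets of `H`, and let `e` be `+1` on `i + H`, `-1` on `j + H`, `0` elsewhere.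
Then `∑ e = 0` (so `e` is tangent to the simplex) and the Fréchet derivative of `V` at
`x` sends `e` to `2·e'`, where `e'` is `+1` on `p + i + H`, `-1` on `p + j + H`, and
`0` elsewhere: an expanding tangent direction with factor `2`. -/
theorem fderiv_qso_coset_expands {G : Type*} [AddCommGroup G] [Fintype G]
    (H : AddSubgroup G) (hH : H ≠ ⊤) (p i j : G) (hij : i - j ∉ H)
    (x : G → ℝ)
    (hx_mem : ∀ g, g - p ∈ H → x g = 1 / (Nat.card H : ℝ))
    (hx_not_mem : ∀ g, g - p ∉ H → x g = 0)
    (e : G → ℝ)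
    (he_i : ∀ s, s - i ∈ H → e s = 1)
    (he_j : ∀ s, s - j ∈ H → e s = -1)
    (he_zero : ∀ s, s - i ∉ H → s - j ∉ H → e s = 0)
    (e' : G → ℝ)
    (he'_i : ∀ s, s - (p + i) ∈ H → e' s = 1)
    (he'_j : ∀ s, s - (p + j) ∈ H → e' s = -1)
    (he'_zero : ∀ s, s - (p + i) ∉ H → s - (p + j) ∉ H → e' s = 0) :
    (∑ g, e g = 0) ∧ fderiv ℝ (QSO (G := G)) x e = (2 : ℝ) • e' :=
  fderiv_qso_coset_expands_general H p i j x hx_mem hx_not_mem e he_i he_j he_zero e' he'_i he'_j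
    he'_zero
end
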